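/- For every n ≥ 1 there is a proof of φ_n in natural deduction for purely implicational classical logic (with Peirce's rule) whose last rule is an →-introduction discharging exactly one occurrence of the assumption ξ_n. -/

import Mathlib

/-- Formulas of purely implicational logic, built from atoms (numbered by `ℕ`)
by the single connective `→` (`impl`). -/
inductive Fm : Type
  | atom : ℕ → Fm
  | impl : Fm → Fm → Fm
deriving DecidableEq

/-- χ[X,Y] = (((X → Y) → X) → X) → Y. -/
def chi (X Y : Fm) : Fm := (((X.impl Y).impl X).impl X).impl Y

/-- The atom `Fm.atom 0` is C, and `Fm.atom k` is D_k for k ≥ 1.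
ξ₁ = χ[D₁, C] and ξ_{i+1} = χ[D_{i+1}, ξ_i]  (the value at 0 is irrelevant). -/
def xi : ℕ → Fm
  | 0 => chi (.atom 1) (.atom 0)
  | 1 => chi (.atom 1) (.atom 0)
  | n + 2 => chi (.atom (n + 2)) (xi (n + 1))

/-- φ_n = ξ_n → C. -/
def phi (n : ℕ) : Fm := (xi n).impl (.atom 0)

/-- Natural deduction for purely implicational classical logic: →-introduction,
→-elimination, and Peirce's rule (from a derivation of c discharging n
occurrences of the open assumption c → e, infer c).  Derivations are indexed
by the multiset of open assumption occurrences and the conclusion. -/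
inductive CDeriv : Multiset Fm → Fm → Type
  | assume (a : Fm) : CDeriv {a} a
  | intro {Γ : Multiset Fm} {a b : Fm} (n : ℕ)
      (d : CDeriv (Γ + Multiset.replicate n a) b) : CDeriv Γ (a.impl b)
  | elim {Γ Δ : Multiset Fm} {a b : Fm}
      (minor : CDeriv Γ a) (major : CDeriv Δ (a.impl b)) : CDeriv (Γ + Δ) b
  | peirce {Γ : Multiset Fm} {c e : Fm} (n : ℕ)
      (d : CDeriv (Γ + Multiset.replicate n (c.impl e)) c) : CDeriv Γ c

/-! The antecedent of χ[X,Y] is Peirce's law for X and Y, which is provable outright, so one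
occurrence of ξ_n yields ξ_{n-1} by a single →-elimination, and so on down to ξ₁ and then C. -/

namespace CDeriv

def cast {Γ Δ : Multiset Fm} {a : Fm} (h : Γ = Δ) (d : CDeriv Γ a) : CDeriv Δ a :=
  h ▸ d

def peirceLaw (X Y : Fm) : CDeriv 0 (((X.impl Y).impl X).impl X) :=
  .intro 1 <| .peirce (e := Y) 1 <| cast (by simp [add_comm])
    (.elim (.assume (X.impl Y)) (.assume ((X.impl Y).impl X)))

def ofChi {Γ : Multiset Fm} {X Y : Fm} (d : CDeriv Γ (chi X Y)) : CDeriv Γ Y :=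
  cast (zero_add Γ) (.elim (peirceLaw X Y) d)

def atomZeroOfXi : ∀ (k : ℕ) {Γ : Multiset Fm}, CDeriv Γ (xi k) → CDeriv Γ (.atom 0)
  | 0, _, d => ofChi d
  | 1, _, d => ofChi d
  | k + 2, _, d => atomZeroOfXi (k + 1) (ofChi d)

end CDeriv

theorem classical_proof_one_assumption_general (n : ℕ) :
    ∃ d : CDeriv ((0 : Multiset Fm) + Multiset.replicate 1 (xi n)) (.atom 0),
      ∃ p : CDeriv 0 (phi n), p = CDeriv.intro 1 d :=
  ⟨.atomZeroOfXi n (.cast (by simp) (.assume (xi n))), _, rfl⟩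

/-- for every n ≥ 1 there is a proof of φ_n in purely
implicational classical natural deduction (with Peirce's rule) whose last rule
is an →-introduction discharging exactly one occurrence of ξ_n. -/
theorem classical_proof_one_assumption (n : ℕ) (hn : 1 ≤ n) :
    ∃ d : CDeriv ((0 : Multiset Fm) + Multiset.replicate 1 (xi n)) (.atom 0),
      ∃ p : CDeriv 0 (phi n), p = CDeriv.intro 1 d :=
  classical_proof_one_assumption_general n
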